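/- arXiv:2104.14765 — 2 statements merged into one kernel-verified Lean document; each statement's English description precedes it below -/
import Mathlib

section
/- One has the equalities of ideals of ℤ[G]: 𝓙 = Σ_{i=1}^s g̃^{i−1}·J_i = Σ_{i=1}^s (1 − φ̃^{-1})^{i−1}·J_i. -/
open MonoidAlgebra Finset

/-- The sum `ν_H = Σ_{σ ∈ H} σ` of the elements of a subgroup `H` in the group algebra. -/
noncomputable def nuElt (R : Type) [CommRing R] {G : Type} [CommGroup G] [Fintype G]
    (H : Subgroup G) : MonoidAlgebra R G :=
  letI := Classical.decPred (· ∈ H)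
  ∑ σ ∈ Finset.univ.filter (· ∈ H), MonoidAlgebra.of R G σ

/-- `I = I_1 × ⋯ × I_s` where `I_l` is the (possibly trivial) cyclic subgroup generated
by `σ l`: every element of `I` is, in a unique way, the product of elements of the
subgroups `⟨σ l⟩`. -/
def IsDecomp {G : Type} [CommGroup G] (I : Subgroup G) {s : ℕ} (σ : Fin s → G) : Prop :=
  (∀ l, σ l ∈ I) ∧
    ∀ g ∈ I, ∃! x : ∀ l, Subgroup.zpowers (σ l), (∏ l, ((x l : G))) = g

/-- The ideal `Z_i` generated by the products `ν_{l_1} ⋯ ν_{l_{s-i}}` over all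
`(s-i)`-element subsets `{l_1 < ⋯ < l_{s-i}}` of `{1, …, s}`. -/
noncomputable def Zideal {G : Type} [CommGroup G] [Fintype G] {s : ℕ} (σ : Fin s → G)
    (i : ℕ) : Ideal (MonoidAlgebra ℤ G) :=
  Ideal.span {x | ∃ T : Finset (Fin s), T.card = s - i ∧
    x = ∏ l ∈ T, nuElt ℤ (Subgroup.zpowers (σ l))}

/-- The ideal `𝓘_H = ker(ℤ[G] → ℤ[G/H])`. -/
noncomputable def kerIdeal {G : Type} [CommGroup G] [Fintype G] (H : Subgroup G) :
    Ideal (MonoidAlgebra ℤ G) :=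
  RingHom.ker (MonoidAlgebra.mapDomainRingHom ℤ (QuotientGroup.mk' H))

/-- The ideal `J_i = Σ_{j=0}^{s-i} Z_{i+j} 𝓘_I^j` (for `1 ≤ i ≤ s`). -/
noncomputable def Jideal {G : Type} [CommGroup G] [Fintype G] (I : Subgroup G)
    {s : ℕ} (σ : Fin s → G) (i : ℕ) : Ideal (MonoidAlgebra ℤ G) :=
  ∑ j ∈ Finset.range (s - i + 1), Zideal σ (i + j) * (kerIdeal I) ^ j

/-!
Because `D/I` is generated by the image of `φ̃`, `𝓘_D = 𝓘_I + (1 - φ̃⁻¹)`. Ideals form an idempotent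
semiring, where binomial coefficients are `1`, so expanding `𝓘_D^{i-1}` and regrouping by the power
of `(1 - φ̃⁻¹)` gives `𝓙 = Σ (1 - φ̃⁻¹)^{i-1} J_i`. For `g̃ = (1 - φ̃⁻¹) + #I`: since `#I ≡ ν_I`
modulo `𝓘_I`, `ν_I ∈ Z_m` and `J_m = Z_m + 𝓘_I J_{m+1}`, we get `#I · J_{m+1} ⊆ J_m`. Hence
replacing `1 - φ̃⁻¹` by `g̃` or conversely and expanding binomially only produces terms that
already lie in the other sum.
-/

section IdemCommSemiring
variable {α : Type*} [IdemCommSemiring α]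

theorem sum_le_of_forall_le {ι : Type*} {s : Finset ι} {f : ι → α} {c : α}
    (h : ∀ i ∈ s, f i ≤ c) : ∑ i ∈ s, f i ≤ c :=
  Finset.sum_induction f (· ≤ c) (fun _ _ => add_le) zero_le h

theorem add_pow_eq_sum (a b : α) (n : ℕ) :
    (a + b) ^ n = ∑ k ∈ range (n + 1), a ^ k * b ^ (n - k) := by
  rw [add_pow]
  refine sum_congr rfl fun k hk => ?_
  rw [natCast_eq_one (Nat.choose_pos (mem_range_succ_iff.1 hk)).ne', mul_one]

theorem sum_mul_add_pow_eq (Z : ℕ → α) (a b : α) (s : ℕ) :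
    ∑ i ∈ range s, Z (i + 1) * (a + b) ^ i
      = ∑ k ∈ range s, b ^ k * ∑ j ∈ range (s - k), Z (k + 1 + j) * a ^ j := by
  simp_rw [mul_sum]
  rw [← sum_range_diag_flip s fun k j => b ^ k * (Z (k + 1 + j) * a ^ j)]
  refine sum_congr rfl fun i _ => ?_
  rw [add_comm a b, add_pow_eq_sum, mul_sum]
  refine sum_congr rfl fun k hk => ?_
  rw [Nat.add_right_comm, Nat.add_sub_cancel' (mem_range_succ_iff.1 hk)]
  ring

theorem pow_mul_le_of_mul_succ_le {J : ℕ → α} {n : α} (hJ : ∀ m, n * J (m + 1) ≤ J m)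
    (d m : ℕ) : n ^ d * J (m + d) ≤ J m := by
  induction d with
  | zero => simp
  | succ d ih =>
    calc n ^ (d + 1) * J (m + (d + 1)) = n ^ d * (n * J (m + d + 1)) := by ring_nf
      _ ≤ n ^ d * J (m + d) := by gcongr; exact hJ _
      _ ≤ J m := ih

theorem sum_pow_mul_le_of_le_add {J : ℕ → α} {n y y' : α} (hJ : ∀ m, n * J (m + 1) ≤ J m)
    (hy : y ≤ y' + n) (s : ℕ) :
    ∑ k ∈ range s, y ^ k * J (k + 1) ≤ ∑ k ∈ range s, y' ^ k * J (k + 1) := by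
  refine sum_le_of_forall_le fun i hi => ?_
  calc y ^ i * J (i + 1) ≤ (y' + n) ^ i * J (i + 1) := by gcongr
    _ = ∑ k ∈ range (i + 1), y' ^ k * (n ^ (i - k) * J (k + 1 + (i - k))) := by
      rw [add_pow_eq_sum, sum_mul]
      refine sum_congr rfl fun k hk => ?_
      rw [Nat.add_right_comm, Nat.add_sub_cancel' (mem_range_succ_iff.1 hk), mul_assoc]
    _ ≤ ∑ k ∈ range (i + 1), y' ^ k * J (k + 1) :=
      sum_le_sum fun k _ => by gcongr; exact pow_mul_le_of_mul_succ_le hJ _ _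
    _ ≤ ∑ k ∈ range s, y' ^ k * J (k + 1) :=
      sum_le_sum_of_subset (range_subset_range.2 (mem_range.1 hi))

end IdemCommSemiring

section GroupAlgebra
variable {G : Type} [CommGroup G] [Fintype G]

theorem of_sub_one_mem_kerIdeal {H : Subgroup G} {h : G} (hh : h ∈ H) :
    of ℤ G h - 1 ∈ kerIdeal H := by
  rw [kerIdeal, RingHom.mem_ker, map_sub, map_one]
  simp [(QuotientGroup.eq_one_iff h).2 hh, ← one_def]

/-- The kernel of `ℤ[G] → ℤ[G/H]` is the smallest ideal containing all `h - 1`, `h ∈ H`. -/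
theorem kerIdeal_le_iff (H : Subgroup G) (K : Ideal (MonoidAlgebra ℤ G)) :
    kerIdeal H ≤ K ↔ H ≤ ((Ideal.Quotient.mk K).toMonoidHom.comp (of ℤ G)).ker := by
  constructor
  · intro hK h hh
    exact (Ideal.Quotient.eq.2 (hK (of_sub_one_mem_kerIdeal hh))).trans (map_one _)
  · intro hH f hf
    let lift : MonoidAlgebra ℤ (G ⧸ H) →+* MonoidAlgebra ℤ G ⧸ K :=
      MonoidAlgebra.lift ℤ (MonoidAlgebra ℤ G ⧸ K) (G ⧸ H) (QuotientGroup.lift H _ hH)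
    have hcomp : lift.comp (mapDomainRingHom ℤ (QuotientGroup.mk' H)) = Ideal.Quotient.mk K := by
      ext <;> simp [lift]
    rw [← Ideal.Quotient.eq_zero_iff_mem, ← hcomp, RingHom.comp_apply, hf, map_zero]

theorem kerIdeal_mono {H H' : Subgroup G} (hHH' : H ≤ H') : kerIdeal H ≤ kerIdeal H' :=
  (kerIdeal_le_iff H _).2 (hHH'.trans ((kerIdeal_le_iff H' _).1 le_rfl))

theorem kerIdeal_eq_kerIdeal_add_span_one_sub {I D : Subgroup G} (hID : I ≤ D) {φ : G}
    (hφ : φ ∈ D) (hgen : ∀ d ∈ D, ∃ n : ℤ, φ ^ n * d⁻¹ ∈ I) :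
    kerIdeal D = kerIdeal I + Ideal.span {1 - of ℤ G φ⁻¹} := by
  set K := kerIdeal I + Ideal.span {1 - of ℤ G φ⁻¹}
  refine le_antisymm ((kerIdeal_le_iff D K).2 fun d hd => ?_) (add_le (kerIdeal_mono hID) ?_)
  · have hI := (kerIdeal_le_iff I K).1 le_self_add
    have hφ' : φ⁻¹ ∈ ((Ideal.Quotient.mk K).toMonoidHom.comp (of ℤ G)).ker := by
      refine (Ideal.Quotient.eq.2 ?_).trans (map_one _)
      rw [← neg_sub]
      exact neg_mem (Submodule.mem_sup_right (Ideal.mem_span_singleton_self _))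
    obtain ⟨n, hn⟩ := hgen d hd
    rw [show d = (φ ^ n * d⁻¹)⁻¹ * φ ^ n by group]
    exact mul_mem (inv_mem (hI hn)) (zpow_mem (inv_mem_iff.1 hφ') n)
  · rw [Ideal.span_singleton_le_iff_mem, ← neg_sub]
    exact neg_mem (of_sub_one_mem_kerIdeal (inv_mem hφ))

theorem nuElt_eq_sum_subtype (R : Type) [CommRing R] (H : Subgroup G) [Fintype H] :
    nuElt R H = ∑ g : H, of R G g :=
  Finset.sum_subtype _ (by simp) _

theorem nuElt_sub_card_mem_kerIdeal (H : Subgroup G) :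
    nuElt ℤ H - (Nat.card H : MonoidAlgebra ℤ G) ∈ kerIdeal H := by
  classical
  have hsum : nuElt ℤ H - (Nat.card H : MonoidAlgebra ℤ G) = ∑ g : H, (of ℤ G g - 1) := by
    rw [sum_sub_distrib, nuElt_eq_sum_subtype, sum_const, card_univ, Nat.card_eq_fintype_card,
      nsmul_one]
  rw [hsum]
  exact Ideal.sum_mem _ fun g _ => of_sub_one_mem_kerIdeal g.2

theorem prod_nuElt_zpowers (R : Type) [CommRing R] {I : Subgroup G} {s : ℕ} {σ : Fin s → G}
    (hdec : IsDecomp I σ) : ∏ l, nuElt R (Subgroup.zpowers (σ l)) = nuElt R I := by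
  classical
  have hmem (x : ∀ l, Subgroup.zpowers (σ l)) : ∏ l, (x l : G) ∈ I :=
    Subgroup.prod_mem I fun l _ => Subgroup.zpowers_le.2 (hdec.1 l) (x l).2
  have hbij : Function.Bijective fun x : (∀ l, Subgroup.zpowers (σ l)) => (⟨_, hmem x⟩ : I) := by
    refine ⟨fun x y hxy => ?_, fun g => ?_⟩
    · obtain ⟨z, -, huniq⟩ := hdec.2 _ (hmem x)
      rw [huniq x rfl, huniq y (congrArg Subtype.val hxy).symm]
    · obtain ⟨z, hz, -⟩ := hdec.2 g g.2
      exact ⟨z, Subtype.ext hz⟩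
  simp_rw [nuElt_eq_sum_subtype, prod_univ_sum, Fintype.piFinset_univ, ← map_prod]
  exact Fintype.sum_bijective _ hbij (fun x => of R G (∏ l, (x l : G))) (fun g => of R G g)
    fun _ => rfl

variable {s : ℕ} {σ : Fin s → G}

theorem Zideal_eq_top {m : ℕ} (hm : s ≤ m) : Zideal σ m = ⊤ :=
  (Ideal.eq_top_iff_one _).2 (Ideal.subset_span ⟨∅, by simp [Nat.sub_eq_zero_of_le hm], by simp⟩)

theorem nuElt_mem_Zideal {I : Subgroup G} (hdec : IsDecomp I σ) (m : ℕ) :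
    nuElt ℤ I ∈ Zideal σ m := by
  classical
  obtain ⟨T, -, hT⟩ := exists_subset_card_eq (s := (univ : Finset (Fin s))) (n := s - m)
    (by simp)
  rw [← prod_nuElt_zpowers ℤ hdec, ← prod_sdiff (subset_univ T)]
  exact Ideal.mul_mem_left _ _ (Ideal.subset_span ⟨T, hT, rfl⟩)

theorem Jideal_eq_Zideal_add_mul (I : Subgroup G) (σ : Fin s → G) (m : ℕ) :
    Jideal I σ m = Zideal σ m + kerIdeal I * Jideal I σ (m + 1) := by
  by_cases hm : s ≤ m
  · simp [Jideal, Nat.sub_eq_zero_of_le hm, Nat.sub_eq_zero_of_le (hm.trans m.le_succ),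
      Zideal_eq_top hm, Zideal_eq_top (hm.trans m.le_succ)]
  · rw [Jideal, Jideal, show s - m + 1 = s - (m + 1) + 1 + 1 by omega, sum_range_succ', mul_sum,
      add_comm, add_zero, pow_zero, mul_one]
    congr 1
    refine sum_congr rfl fun j _ => ?_
    rw [pow_succ', ← Nat.add_assoc, Nat.add_right_comm, mul_left_comm]

theorem Jideal_succ_eq {I : Subgroup G} {k : ℕ} (hk : k < s) :
    Jideal I σ (k + 1) = ∑ j ∈ range (s - k), Zideal σ (k + 1 + j) * kerIdeal I ^ j := by
  rw [Jideal, show s - (k + 1) + 1 = s - k by omega]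

theorem span_card_mul_Jideal_succ_le {I : Subgroup G} (hdec : IsDecomp I σ) (m : ℕ) :
    Ideal.span {(Nat.card I : MonoidAlgebra ℤ G)} * Jideal I σ (m + 1) ≤ Jideal I σ m := by
  have hcard : Ideal.span {(Nat.card I : MonoidAlgebra ℤ G)}
      ≤ Ideal.span {nuElt ℤ I} + kerIdeal I := by
    rw [Ideal.span_singleton_le_iff_mem, ← sub_sub_cancel (nuElt ℤ I) (Nat.card I)]
    exact Submodule.sub_mem_sup (Ideal.mem_span_singleton_self _) (nuElt_sub_card_mem_kerIdeal I)
  calc Ideal.span {(Nat.card I : MonoidAlgebra ℤ G)} * Jideal I σ (m + 1)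
      ≤ (Ideal.span {nuElt ℤ I} + kerIdeal I) * Jideal I σ (m + 1) := by gcongr
    _ = Ideal.span {nuElt ℤ I} * Jideal I σ (m + 1) + kerIdeal I * Jideal I σ (m + 1) := add_mul ..
    _ ≤ Zideal σ m + kerIdeal I * Jideal I σ (m + 1) := by
      gcongr
      exact Ideal.mul_le_left.trans
        ((Ideal.span_singleton_le_iff_mem _).2 (nuElt_mem_Zideal hdec m))
    _ = Jideal I σ m := (Jideal_eq_Zideal_add_mul I σ m).symm

end GroupAlgebra

/-- `𝓙 = Σ_{i=1}^s g̃^{i−1}·J_i = Σ_{i=1}^s (1 − φ̃⁻¹)^{i−1}·J_i`, where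
`𝓙 = Σ_{i=1}^s Z_i 𝓘_D^{i−1}` and `g̃ = 1 − φ̃⁻¹ + #I`. -/
theorem statement12 {G : Type} [CommGroup G] [Fintype G] (I D : Subgroup G) (hID : I ≤ D)
    (φt : G) (hφt : φt ∈ D) (hφgen : ∀ d ∈ D, ∃ n : ℤ, φt ^ n * d⁻¹ ∈ I)
    {s : ℕ} (σ : Fin s → G) (hdec : IsDecomp I σ) :
    (∑ i ∈ Finset.range s, Zideal σ (i + 1) * (kerIdeal D) ^ i
      = ∑ i ∈ Finset.range s,
          Ideal.span {(1 - MonoidAlgebra.of ℤ G φt⁻¹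
            + (Nat.card I : MonoidAlgebra ℤ G)) ^ i} * Jideal I σ (i + 1)) ∧
    (∑ i ∈ Finset.range s, Zideal σ (i + 1) * (kerIdeal D) ^ i
      = ∑ i ∈ Finset.range s,
          Ideal.span {(1 - MonoidAlgebra.of ℤ G φt⁻¹) ^ i} * Jideal I σ (i + 1)) := by
  set x := 1 - MonoidAlgebra.of ℤ G φt⁻¹
  set c := (Nat.card I : MonoidAlgebra ℤ G)
  have hsum : ∑ i ∈ range s, Zideal σ (i + 1) * kerIdeal D ^ i
      = ∑ k ∈ range s, Ideal.span {x} ^ k * Jideal I σ (k + 1) := by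
    rw [kerIdeal_eq_kerIdeal_add_span_one_sub hID hφt hφgen, sum_mul_add_pow_eq]
    exact sum_congr rfl fun k hk => by rw [Jideal_succ_eq (mem_range.1 hk)]
  have hJ := span_card_mul_Jideal_succ_le hdec
  have hx : Ideal.span {x} ≤ Ideal.span {x + c} + Ideal.span {c} := by
    rw [Ideal.span_singleton_le_iff_mem]
    simpa using Submodule.sub_mem_sup (Ideal.mem_span_singleton_self (x + c))
      (Ideal.mem_span_singleton_self c)
  have hxc : Ideal.span {x + c} ≤ Ideal.span {x} + Ideal.span {c} := by
    rw [Ideal.span_singleton_le_iff_mem]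
    exact Submodule.add_mem_sup (Ideal.mem_span_singleton_self _) (Ideal.mem_span_singleton_self _)
  simp_rw [← Ideal.span_singleton_pow, hsum]
  exact ⟨le_antisymm (sum_pow_mul_le_of_le_add hJ hx s) (sum_pow_mul_le_of_le_add hJ hxc s), trivial⟩
end

section
/- Let R be a commutative ring, A an m×n matrix over R, and I = (a_1,…,a_r) a finitely generated ideal of R. Let A' be the (m + rn)×n matrix obtained from A by appending, for each 1 ≤ k ≤ r, the n rows of the scalar matrix a_k·Id_n. Then Fitt_0(A') = Σ_{i=0}^n I^i·Fitt_i(A). (Equivalently, if X is an R-module generated by n elements with presentation matrix A, then Fitt_{0,R}(X/IX) = Σ_{i=0}^n I^i·Fitt_{i,R}(X), since A' is a presentation matrix of X/IX.) -/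
/-!
Both inclusions come from Laplace expansion. Expanding an `n × n` minor of `A'` along its rows
taken from the blocks `a_k · Id_n` shows, by induction on the size of the minor, that a minor
using `t` such rows lies in `I^t · Fitt_t(A)`. Conversely, a row `a_k e_l` whose column `l` is
not yet used extends an `s × s` minor `d` to an `(s+1) × (s+1)` minor equal to `a_k d`, so
`I · (s-minors of A') ⊆ (s+1)-minors of A'` for `s < n`; iterating gives
`I^i · Fitt_i(A) ⊆ Fitt_0(A')`.
-/

/-- `Fitt_i(A)`: the ideal generated by the `(n-i) × (n-i)` minors of a matrix `A`
with `n` columns (so `Fitt_i(A) = (1)` for `i ≥ n`). -/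
noncomputable def fittMat {R : Type} [CommRing R] {m n : Type} [Fintype m] [Fintype n]
    (A : Matrix m n R) (i : ℕ) : Ideal R :=
  Ideal.span {x : R |
    ∃ (r : Fin (Fintype.card n - i) → m) (c : Fin (Fintype.card n - i) → n),
      x = (A.submatrix r c).det}

open Matrix Finset

noncomputable def minorIdeal {R ι ν : Type*} [CommRing R] (M : Matrix ι ν R) (s : ℕ) :
    Ideal R :=
  Ideal.span {x | ∃ (r : Fin s → ι) (c : Fin s → ν), x = (M.submatrix r c).det}

def scalarRows {R κ ν : Type*} [Zero R] [DecidableEq ν] (a : κ → R) : Matrix (κ × ν) ν R :=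
  fun kl c => if c = kl.2 then a kl.1 else 0

section Minors

variable {R ι κ ν : Type*} [CommRing R]

theorem det_submatrix_mem_minorIdeal (M : Matrix ι ν R) {s : ℕ} (r : Fin s → ι)
    (c : Fin s → ν) : (M.submatrix r c).det ∈ minorIdeal M s :=
  Ideal.subset_span ⟨r, c, rfl⟩

theorem minorIdeal_le_fromRows (A : Matrix ι ν R) (B : Matrix κ ν R) (s : ℕ) :
    minorIdeal A s ≤ minorIdeal (fromRows A B) s :=
  Ideal.span_le.2 fun _ ⟨r, c, hx⟩ => hx ▸ det_submatrix_mem_minorIdeal _ (Sum.inl ∘ r) c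

theorem det_submatrix_fromRows_mem_minorIdeal_of_isLeft (A : Matrix ι ν R)
    (B : Matrix κ ν R) {q : ℕ} {ρ : Fin q → ι ⊕ κ} (hρ : ∀ x, (ρ x).isLeft)
    (γ : Fin q → ν) : ((fromRows A B).submatrix ρ γ).det ∈ minorIdeal A q := by
  choose ρ' hρ' using fun x => Sum.isLeft_iff.1 (hρ x)
  obtain rfl : ρ = Sum.inl ∘ ρ' := funext hρ'
  exact det_submatrix_mem_minorIdeal A ρ' γ

theorem le_sum_range_pow_mul (I : Ideal R) (J : ℕ → Ideal R) (q : ℕ) :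
    J q ≤ ∑ t ∈ range (q + 1), I ^ t * J (q - t) := by
  rw [sum_range_succ']
  simp

theorem mul_sum_range_pow_mul_le (I : Ideal R) (J : ℕ → Ideal R) (q : ℕ) :
    I * ∑ t ∈ range (q + 1), I ^ t * J (q - t)
      ≤ ∑ t ∈ range (q + 2), I ^ t * J (q + 1 - t) :=
  calc I * ∑ t ∈ range (q + 1), I ^ t * J (q - t)
      = ∑ t ∈ range (q + 1), I ^ (t + 1) * J (q + 1 - (t + 1)) := by
        rw [mul_sum]
        refine sum_congr rfl fun t _ => ?_
        rw [Nat.add_sub_add_right, pow_succ', mul_assoc]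
    _ ≤ _ := by
        rw [sum_range_succ' _ (q + 1)]
        exact le_self_add

theorem det_submatrix_fromRows_mem (A : Matrix ι ν R) {B : Matrix κ ν R} {I : Ideal R}
    (hB : ∀ k j, B k j ∈ I) {q : ℕ} (ρ : Fin q → ι ⊕ κ) (γ : Fin q → ν) :
    ((fromRows A B).submatrix ρ γ).det
      ∈ ∑ t ∈ range (q + 1), I ^ t * minorIdeal A (q - t) := by
  induction q with
  | zero =>
    exact le_sum_range_pow_mul I _ 0
      (det_submatrix_fromRows_mem_minorIdeal_of_isLeft A B (fun x => x.elim0) γ)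
  | succ q ih =>
    by_cases hρ : ∀ x, (ρ x).isLeft
    · exact le_sum_range_pow_mul I _ _
        (det_submatrix_fromRows_mem_minorIdeal_of_isLeft A B hρ γ)
    push Not at hρ
    obtain ⟨x₀, hx₀⟩ := hρ
    obtain ⟨k, hk⟩ := Sum.isRight_iff.1 (Sum.not_isLeft.1 hx₀)
    rw [det_succ_row _ x₀]
    refine mul_sum_range_pow_mul_le I (minorIdeal A) q (sum_mem fun j _ => ?_)
    have hentry : (fromRows A B).submatrix ρ γ x₀ j ∈ I := by
      simpa [hk] using hB k (γ j)
    exact Ideal.mul_mem_mul (Ideal.mul_mem_left _ _ hentry) (ih (ρ ∘ x₀.succAbove) _)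

variable [DecidableEq ν]

theorem mul_det_submatrix_mem_minorIdeal_succ (M : Matrix ι ν R) {x : ι} {l : ν} {b : R}
    (hx : M x = Pi.single l b) {s : ℕ} (ρ : Fin s → ι) (γ : Fin s → ν)
    (hl : l ∉ Set.range γ) : b * (M.submatrix ρ γ).det ∈ minorIdeal M (s + 1) := by
  convert det_submatrix_mem_minorIdeal M (Fin.cons x ρ) (Fin.cons l γ : Fin (s + 1) → ν) using 1
  rw [det_succ_row_zero, Fin.sum_univ_succ, sum_eq_zero]
  · simp [hx]
  · intro j _
    have : γ j ≠ l := fun h => hl ⟨j, h⟩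
    simp [hx, this]

theorem span_mul_minorIdeal_le [Fintype ν] (M : Matrix ι ν R) {S : Set R}
    (hS : ∀ b ∈ S, ∀ l, ∃ x, M x = Pi.single l b) {s : ℕ} (hs : s < Fintype.card ν) :
    Ideal.span S * minorIdeal M s ≤ minorIdeal M (s + 1) := by
  rw [minorIdeal, Ideal.span_mul_span', Ideal.span_le]
  rintro _ ⟨b, hb, _, ⟨ρ, γ, rfl⟩, rfl⟩
  obtain ⟨l, hl⟩ : ∃ l, l ∉ Set.range γ := by
    by_contra! h
    have := Fintype.card_le_of_surjective γ h
    simp only [Fintype.card_fin] at this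
    omega
  obtain ⟨x, hx⟩ := hS b hb l
  exact mul_det_submatrix_mem_minorIdeal_succ M hx ρ γ hl

theorem span_pow_mul_minorIdeal_le [Fintype ν] (M : Matrix ι ν R) {S : Set R}
    (hS : ∀ b ∈ S, ∀ l, ∃ x, M x = Pi.single l b) {s i : ℕ} (h : s + i ≤ Fintype.card ν) :
    Ideal.span S ^ i * minorIdeal M s ≤ minorIdeal M (s + i) := by
  induction i with
  | zero => simp
  | succ i ih =>
    rw [pow_succ', mul_assoc]
    calc Ideal.span S * (Ideal.span S ^ i * minorIdeal M s)
        ≤ Ideal.span S * minorIdeal M (s + i) := Ideal.mul_mono_right (ih (by omega))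
      _ ≤ minorIdeal M (s + i + 1) := span_mul_minorIdeal_le M hS (by omega)

theorem scalarRows_apply_mk (a : κ → R) (k : κ) (l : ν) :
    scalarRows a (k, l) = Pi.single l (a k) := by
  ext c
  simp [scalarRows, Pi.single_apply]

theorem scalarRows_mem_span_range (a : κ → R) (kl : κ × ν) (c : ν) :
    scalarRows a kl c ∈ Ideal.span (Set.range a) := by
  unfold scalarRows
  split_ifs
  exacts [Ideal.subset_span ⟨kl.1, rfl⟩, zero_mem _]

end Minors

/-- for an `m × n` matrix `A` over `R`, a finitely generated ideal
`I = (a_1, …, a_r)`, and `A'` the `(m + rn) × n` matrix obtained from `A` by appending,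
for each `k`, the `n` rows of the scalar matrix `a_k·Id_n`, one has
`Fitt_0(A') = Σ_{i=0}^n I^i·Fitt_i(A)`.  (Equivalently, if `X` is presented by `A` then
`Fitt_{0,R}(X/IX) = Σ_{i=0}^n I^i·Fitt_{i,R}(X)`, since `A'` presents `X/IX`.) -/
theorem statement16 {R : Type} [CommRing R] {m n r : ℕ}
    (A : Matrix (Fin m) (Fin n) R) (a : Fin r → R) :
    fittMat (Sum.elim A
        (fun (kl : Fin r × Fin n) (c : Fin n) => if c = kl.2 then a kl.1 else 0)) 0
      = ∑ i ∈ Finset.range (n + 1), (Ideal.span (Set.range a)) ^ i * fittMat A i := by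
  change minorIdeal (fromRows A (scalarRows a)) (Fintype.card (Fin n) - 0)
    = ∑ i ∈ range (n + 1), _ ^ i * minorIdeal A (Fintype.card (Fin n) - i)
  simp only [Fintype.card_fin, Nat.sub_zero]
  apply le_antisymm
  · rw [minorIdeal, Ideal.span_le]
    rintro _ ⟨ρ, γ, rfl⟩
    exact det_submatrix_fromRows_mem A (scalarRows_mem_span_range a) ρ γ
  · have hrows : ∀ b ∈ Set.range a, ∀ l, ∃ x, fromRows A (scalarRows a) x = Pi.single l b := by
      rintro _ ⟨k, rfl⟩ l
      exact ⟨Sum.inr (k, l), scalarRows_apply_mk a k l⟩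
    rw [Ideal.sum_eq_sup, Finset.sup_le_iff]
    intro i hi
    have hin : n - i + i = n := Nat.sub_add_cancel (Nat.lt_succ_iff.1 (mem_range.1 hi))
    calc _ ≤ Ideal.span (Set.range a) ^ i * minorIdeal (fromRows A (scalarRows a)) (n - i) :=
          Ideal.mul_mono_right (minorIdeal_le_fromRows A _ _)
      _ ≤ minorIdeal (fromRows A (scalarRows a)) (n - i + i) :=
          span_pow_mul_minorIdeal_le _ hrows (by simp [hin])
      _ = _ := by rw [hin]
end
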